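/- arXiv:math/0703225 — 2 statements merged into one kernel-verified Lean document; each statement's English description precedes it below -/
import Mathlib

section
/- Let G be a group, H a normal subgroup of finite index, k a commutative ring, and N a k[H]-module. Then the restriction to H of the induced module Ind_H^G N is isomorphic, as a k[H]-module, to the direct sum over a set of coset representatives g of G/H of the conjugate modules ᵍN, where ᵍN has underlying k-module N with H-action h · n := (g⁻¹hg) · n. -/
variable {k G N : Type*} [CommRing k] [Group G] [AddCommGroup N] [Module k N]

/-- The induced module `Ind_H^G N` of a representation `ρ` of `H` on `N`, realized as the
`k`-module of functions `f : G → N` satisfying `f (g * h) = ρ h⁻¹ (f g)`.  (For a finite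
index subgroup `H` this is the usual induced module `k[G] ⊗_{k[H]} N`.) -/
def IndMod (H : Subgroup G) (ρ : Representation k H N) : Submodule k (G → N) where
  carrier := { f | ∀ (g : G) (h : H), f (g * (h : G)) = ρ h⁻¹ (f g) }
  add_mem' := by
    intro f g hf hg x h
    simp only [Pi.add_apply, hf x h, hg x h, map_add]
  zero_mem' := by intro g h; simp
  smul_mem' := by
    intro c f hf g h
    simp only [Pi.smul_apply, hf g h, map_smul]

/-- The action of `h ∈ H` on the induced module, by left translation. -/
def indSMul (H : Subgroup G) (ρ : Representation k H N) (h : H) (f : IndMod H ρ) :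
    IndMod H ρ :=
  ⟨fun g => (f : G → N) ((h : G)⁻¹ * g), by
    intro g h'
    have := f.2 ((h : G)⁻¹ * g) h'
    simpa [mul_assoc] using this⟩

/-- Mackey's decomposition for a normal subgroup: if `H ⊴ G` has finite index and `N` is a
representation of `H`, then for any choice `s` of coset representatives for `G ⧸ H`, the
restriction to `H` of the induced module `Ind_H^G N` is isomorphic, as an `H`-module, to
the direct sum over the cosets `c` of the conjugate modules `ᵍN` (with `g = s c`), where
`ᵍN` is `N` with `H`-action `h · n := ρ (g⁻¹ * h * g) n`. -/
theorem indMod_restrict_iso_directSum_conjugates (H : Subgroup G) [hN : H.Normal]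
    [H.FiniteIndex] (ρ : Representation k H N) (s : G ⧸ H → G)
    (hs : ∀ c : G ⧸ H, ((s c : G) : G ⧸ H) = c) :
    ∃ e : IndMod H ρ ≃ₗ[k] ((G ⧸ H) → N),
      ∀ (h : H) (f : IndMod H ρ) (c : G ⧸ H),
        e (indSMul H ρ h f) c =
          ρ ⟨(s c)⁻¹ * (h : G) * s c, by
              simpa [mul_assoc] using hN.conj_mem _ h.2 (s c)⁻¹⟩ (e f c) := by

  classical
  have mem : ∀ g : G, (s (g : G ⧸ H))⁻¹ * g ∈ H := by
    intro g
    rw [← QuotientGroup.eq]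
    exact hs _
  refine ⟨LinearEquiv.ofLinear
    { toFun := fun f c => (f : G → N) (s c)
      map_add' := fun f g => rfl
      map_smul' := fun c f => rfl }
    { toFun := fun u => ⟨fun g => ρ (⟨(s (g : G ⧸ H))⁻¹ * g, mem g⟩ : H)⁻¹ (u g), ?_⟩
      map_add' := fun u v => by ext g; simp
      map_smul' := fun c u => by ext g; simp }
    ?_ ?_, ?_⟩
  · intro g h
    have hq : ((g * (h : G) : G) : G ⧸ H) = (g : G ⧸ H) := by
      simpa using (QuotientGroup.mk_mul_of_mem g h.2)
    simp only [hq]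
    have key : (⟨(s (g : G ⧸ H))⁻¹ * (g * (h : G)), by rw [← hq]; exact mem _⟩ : H)⁻¹
        = h⁻¹ * (⟨(s (g : G ⧸ H))⁻¹ * g, mem g⟩ : H)⁻¹ := by
      rw [← mul_inv_rev]
      congr 1
      ext
      simp [mul_assoc]
    rw [key, map_mul]
    rfl
  · refine LinearMap.ext fun u => funext fun c => ?_
    have hq : ((s c : G) : G ⧸ H) = c := hs c
    have h1 : (⟨(s ((s c : G) : G ⧸ H))⁻¹ * s c, mem (s c)⟩ : H)⁻¹ = 1 := by
      ext; simp [hq]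
    simp only [LinearMap.coe_comp, Function.comp_apply, LinearMap.coe_mk, AddHom.coe_mk,
      LinearMap.id_coe, id_eq]
    rw [h1]
    simp [hq]
  · refine LinearMap.ext fun f => Subtype.ext (funext fun g => ?_)
    have key := f.2 (s (g : G ⧸ H)) (⟨(s (g : G ⧸ H))⁻¹ * g, mem g⟩ : H)
    simp only [LinearMap.coe_comp, Function.comp_apply, LinearMap.coe_mk, AddHom.coe_mk,
      LinearMap.id_coe, id_eq]
    calc (ρ (⟨(s (g : G ⧸ H))⁻¹ * g, mem g⟩ : H)⁻¹) ((f : G → N) (s (g : G ⧸ H)))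
        = (f : G → N) (s (g : G ⧸ H) * ((s (g : G ⧸ H))⁻¹ * g)) := (key).symm
      _ = (f : G → N) g := by rw [mul_inv_cancel_left]
  · intro h f c
    have hmem : (s c)⁻¹ * (h : G)⁻¹ * s c ∈ H := by
      simpa [mul_assoc] using hN.conj_mem _ (inv_mem h.2) (s c)⁻¹
    show (f : G → N) ((h : G)⁻¹ * s c) = _
    calc (f : G → N) ((h : G)⁻¹ * s c)
        = (f : G → N) (s c * ((⟨(s c)⁻¹ * (h : G)⁻¹ * s c, hmem⟩ : H) : G)) := by
          congr 1; simp [mul_assoc]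
      _ = ρ (⟨(s c)⁻¹ * (h : G)⁻¹ * s c, hmem⟩ : H)⁻¹ ((f : G → N) (s c)) := f.2 _ _
      _ = _ := by
          congr 1
          congr 1
          ext
          simp [mul_inv_rev, mul_assoc]
end

section
/- Let G be a finite group, H a normal subgroup with G/H cyclic of order n, and Λ an algebraically closed field whose characteristic does not divide n. Let M be a finite-dimensional Λ[G]-module which admits no quotient with trivial G-action, but whose restriction to H admits a surjective H-map onto the trivial H-module Λ. Then M admits a surjective G-map onto some one-dimensional representation of G which is inflated from a nontrivial character of G/H. -/
/-!
The `H`-invariant functionals on `M` carry a representation of the cyclic group `G ⧸ H`; it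
contains `ψ` and is nontrivial, as `ψ` is not `G`-invariant. Since `n` is invertible in `Λ`,
`X ^ n - 1` is separable, so a generator acts semisimply, and being nontrivial it has an
eigenvalue `μ ≠ 1`. Its eigenvector is a (surjective, being nonzero) functional on which `G` acts
through the character of `G ⧸ H` sending the generator to `μ`.
-/

open Module End Polynomial in
theorem Module.End.exists_hasEigenvalue_ne_one_of_pow_eq_one {K V : Type*} [Field K]
    [IsAlgClosed K] [AddCommGroup V] [Module K V] [FiniteDimensional K V] {f : End K V} {n : ℕ}
    (hfn : f ^ n = 1) (hn : (n : K) ≠ 0) (hf : f ≠ 1) : ∃ μ ≠ 1, f.HasEigenvalue μ := by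
  have hss : f.IsSemisimple := isSemisimple_of_squarefree_aeval_eq_zero
    (X_pow_sub_one_separable_iff.mpr hn).squarefree (by simp [hfn])
  by_contra! hone
  have htop : f.eigenspace 1 = ⊤ := by
    refine top_unique (hss.iSup_eigenspace_eq_top ▸ iSup_le fun μ ↦ ?_)
    rcases eq_or_ne μ 1 with rfl | hμ
    · exact le_rfl
    · rw [not_not.mp (mt hasEigenvalue_iff.mpr (hone μ hμ))]
      exact bot_le
  exact hf (LinearMap.ext fun v ↦
    (mem_eigenspace_iff.mp (htop ▸ Submodule.mem_top (x := v))).trans (one_smul K v))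

namespace Representation

theorem exists_apply_eq_smul_of_hasEigenvector {k Q V : Type*} [Field k] [Group Q] [Finite Q]
    [AddCommGroup V] [Module k V] (π : Representation k Q V) {σ : Q}
    (hσ : ∀ q, q ∈ Subgroup.zpowers σ) {μ : k} {v : V}
    (hv : Module.End.HasEigenvector (π σ) μ v) :
    ∃ χ : Q →* kˣ, (χ σ : k) = μ ∧ ∀ q, π q v = (χ q : k) • v := by
  have hpow (j : ℕ) : π (σ ^ j) v = μ ^ j • v := by rw [map_pow, hv.pow_apply]
  have hμ : μ ^ orderOf σ = 1 := smul_left_injective k hv.2 <| by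
    simpa [pow_orderOf_eq_one] using (hpow (orderOf σ)).symm
  refine ⟨monoidHomOfForallMemZpowers hσ (orderOf_dvd_of_pow_eq_one
    (Units.pow_ofPowEqOne hμ (orderOf_pos σ).ne')), by simp, fun q ↦ ?_⟩
  obtain ⟨j, rfl⟩ := mem_powers_iff_mem_zpowers.mpr (hσ q)
  rw [hpow, map_pow]
  simp

theorem exists_nontrivial_character_eigenvector {k Q V : Type*} [Field k] [IsAlgClosed k]
    [Group Q] [Finite Q] [IsCyclic Q] [AddCommGroup V] [Module k V] [FiniteDimensional k V]
    (π : Representation k Q V) (hQ : (Nat.card Q : k) ≠ 0) (hπ : ¬ π.IsTrivial) :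
    ∃ χ : Q →* kˣ, χ ≠ 1 ∧ ∃ v : V, v ≠ 0 ∧ ∀ q, π q v = (χ q : k) • v := by
  obtain ⟨σ, hσ⟩ := IsCyclic.exists_generator (α := Q)
  have hσ1 : π σ ≠ 1 := fun h ↦ hπ ⟨fun q ↦ by
    obtain ⟨j, rfl⟩ := mem_powers_iff_mem_zpowers.mpr (hσ q)
    rw [map_pow, h, one_pow]; rfl⟩
  obtain ⟨μ, hμ1, hμ⟩ := Module.End.exists_hasEigenvalue_ne_one_of_pow_eq_one
    (by rw [← map_pow, pow_card_eq_one', map_one]) hQ hσ1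
  obtain ⟨v, hv⟩ := hμ.exists_hasEigenvector
  obtain ⟨χ, hχσ, hχ⟩ := π.exists_apply_eq_smul_of_hasEigenvector hσ hv
  refine ⟨χ, fun h ↦ hμ1 ?_, v, hv.2, hχ⟩
  rw [← hχσ, h, MonoidHom.one_apply, Units.val_one]

theorem dual_quotientToInvariants_mk_inv_apply {k G V : Type*} [CommRing k] [Group G]
    [AddCommGroup V] [Module k V] (ρ : Representation k G V) (S : Subgroup G) [S.Normal] (g : G)
    (φ : invariants (ρ.dual.comp S.subtype)) (v : V) :
    (ρ.dual.quotientToInvariants S (g : G ⧸ S)⁻¹ φ : Module.Dual k V) v =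
      (φ : Module.Dual k V) (ρ g v) := by
  show (φ : Module.Dual k V) (ρ g⁻¹⁻¹ v) = _
  rw [inv_inv]

end Representation

/-- Let `G` be a finite group, `H ⊴ G` with `G ⧸ H` cyclic of order `n`, and `Λ` an
algebraically closed field whose characteristic does not divide `n`.  If a
finite-dimensional `Λ[G]`-module `M` admits no quotient with trivial `G`-action, but its
restriction to `H` surjects `H`-equivariantly onto the trivial module `Λ`, then `M`
surjects `G`-equivariantly onto a one-dimensional representation inflated from a
nontrivial character of `G ⧸ H`. -/
theorem exists_nontrivial_character_quotient
    {G : Type*} [Group G] [Finite G] (H : Subgroup G) [H.Normal]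
    {Λ : Type*} [Field Λ] [IsAlgClosed Λ] (n : ℕ)
    (hcyc : IsCyclic (G ⧸ H)) (hn : Nat.card (G ⧸ H) = n)
    (hchar : ¬ (ringChar Λ ∣ n))
    {M : Type*} [AddCommGroup M] [Module Λ M] [FiniteDimensional Λ M]
    (ρ : Representation Λ G M)
    (hno : ¬ ∃ φ : M →ₗ[Λ] Λ, Function.Surjective φ ∧
      ∀ (g : G) (m : M), φ (ρ g m) = φ m)
    (hres : ∃ ψ : M →ₗ[Λ] Λ, Function.Surjective ψ ∧
      ∀ (h : H) (m : M), ψ (ρ (h : G) m) = ψ m) :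
    ∃ χ : (G ⧸ H) →* Λˣ, χ ≠ 1 ∧ ∃ φ : M →ₗ[Λ] Λ, Function.Surjective φ ∧
      ∀ (g : G) (m : M), φ (ρ g m) = (χ (QuotientGroup.mk g) : Λ) * φ m := by
  obtain ⟨ψ, hψs, hψH⟩ := hres
  have hψ : ψ ∈ Representation.invariants (ρ.dual.comp H.subtype) := fun h ↦
    LinearMap.ext fun m ↦ by simpa [Module.Dual.transpose_apply] using hψH h⁻¹ m
  have hnΛ : (Nat.card (G ⧸ H) : Λ) ≠ 0 := by rwa [hn, Ne, ringChar.spec]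
  -- Without `V :=`, unification has to match two presentations of the module structure on the
  -- invariants and fails.
  obtain ⟨χ, hχ1, φ, hφ0, hχ⟩ := Representation.exists_nontrivial_character_eigenvector
      (V := Representation.invariants (ρ.dual.comp H.subtype)) (ρ.dual.quotientToInvariants H)
      hnΛ fun htriv ↦ hno ⟨ψ, hψs, fun g m ↦ by
        simpa only [ρ.dual_quotientToInvariants_mk_inv_apply, LinearMap.id_apply] using
          congr(($(htriv.out (g : G ⧸ H)⁻¹) ⟨ψ, hψ⟩).1 m)⟩
  -- `ρ.dual g` is the transpose of `ρ g⁻¹`, whence `χ⁻¹`.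
  refine ⟨χ⁻¹, (inv_ne_one (a := χ)).mpr hχ1, φ, LinearMap.surjective_iff_ne_zero.mpr
    fun h ↦ hφ0 (Subtype.ext h), fun g m ↦ ?_⟩
  simpa [ρ.dual_quotientToInvariants_mk_inv_apply] using congr(($(hχ (g : G ⧸ H)⁻¹)).1 m)
end
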